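/- Let $\hat{y} > 0$ and suppose $\rho^* \in [0,1)$ is a maximizer of $\mathrm{EI}(\rho) = (\rho-1)\hat{y}\,\Phi(Z(\rho)) + \sqrt{1-\rho^2}\,\phi(Z(\rho))$ over $[0,1)$, where $Z(\rho) = \frac{(\rho-1)\hat{y}}{\sqrt{1-\rho^2}}$. Then $\rho^* \sqrt{\frac{1+\rho^*}{1-\rho^*}} \ge \hat{y}$. -/

import Mathlib

open Real Set

/-- Standard normal pdf. -/
noncomputable def gaussPdf (x : ℝ) : ℝ := (Real.sqrt (2 * Real.pi))⁻¹ * Real.exp (-x ^ 2 / 2)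

/-- Standard normal cdf. -/
noncomputable def gaussCdf (x : ℝ) : ℝ := ∫ t in Set.Iic x, gaussPdf t

/-- Standardized improvement. -/
noncomputable def Zfun (yhat ρ : ℝ) : ℝ := (ρ - 1) * yhat / Real.sqrt (1 - ρ ^ 2)

/-- Expected improvement parametrized by the correlation. -/
noncomputable def EI (yhat ρ : ℝ) : ℝ :=
  (ρ - 1) * yhat * gaussCdf (Zfun yhat ρ) + Real.sqrt (1 - ρ ^ 2) * gaussPdf (Zfun yhat ρ)

/-!
Differentiating, `EI'(ρ) = ŷ Φ(Z) - ρ φ(Z) / √(1 - ρ²)`, so at a maximizer on `[0, 1)` the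
right derivative is nonpositive: `ŷ √(1 - ρ²) Φ(Z) ≤ ρ φ(Z)`. Nonnegativity of
`∫_{-∞}^z (c + t)² φ(t) dt` for every `c` gives the Gaussian inequality
`φ(z)² ≤ Φ(z) (Φ(z) - z φ(z))`. Together with `Z √(1 - ρ²) = (ρ - 1) ŷ` these yield
`φ(Z)² ≤ (1 + ρ) Φ(Z)²` and then `ŷ² (1 - ρ) ≤ ρ²`.
-/
open MeasureTheory Filter Topology Polynomial

lemma gaussPdf_pos (x : ℝ) : 0 < gaussPdf x := by
  unfold gaussPdf
  positivity

lemma continuous_gaussPdf : Continuous gaussPdf := by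
  unfold gaussPdf
  fun_prop

lemma hasDerivAt_gaussPdf (x : ℝ) : HasDerivAt gaussPdf (-x * gaussPdf x) x := by
  have h := (((hasDerivAt_pow 2 x).neg.div_const 2).exp).const_mul (√(2 * π))⁻¹
  unfold gaussPdf
  refine h.congr_deriv ?_
  simp only [Pi.neg_apply]
  ring

lemma integrable_pow_mul_gaussPdf (n : ℕ) : Integrable fun t => t ^ n * gaussPdf t := by
  have h := (integrable_rpow_mul_exp_neg_mul_sq (by norm_num : (0 : ℝ) < 1 / 2)
    (by linarith [n.cast_nonneg (α := ℝ)] : (-1 : ℝ) < n)).const_mul (√(2 * π))⁻¹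
  refine h.congr (ae_of_all _ fun t => ?_)
  simp only [gaussPdf, Real.rpow_natCast, div_eq_inv_mul, ← neg_mul]
  ring_nf

lemma integrable_eval_mul_gaussPdf (p : ℝ[X]) : Integrable fun t => p.eval t * gaussPdf t := by
  induction p using Polynomial.induction_on' with
  | add p q hp hq =>
    exact (hp.add hq).congr
      (ae_of_all _ fun t => by simp only [Pi.add_apply, eval_add, add_mul])
  | monomial n a =>
    simpa only [eval_monomial, mul_assoc] using (integrable_pow_mul_gaussPdf n).const_mul a

lemma integrable_gaussPdf : Integrable gaussPdf := by
  simpa using integrable_pow_mul_gaussPdf 0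

lemma gaussCdf_pos (z : ℝ) : 0 < gaussCdf z := by
  rw [gaussCdf, setIntegral_pos_iff_support_of_nonneg_ae
    (ae_of_all _ fun x => (gaussPdf_pos x).le) integrable_gaussPdf.integrableOn,
    Function.support_eq_univ fun x => (gaussPdf_pos x).ne', univ_inter]
  simp

lemma hasDerivAt_gaussCdf (x : ℝ) : HasDerivAt gaussCdf (gaussPdf x) x := by
  have hcdf : gaussCdf = fun u => gaussCdf 0 + ∫ t in (0 : ℝ)..u, gaussPdf t := by
    ext u
    rw [← intervalIntegral.integral_Iic_sub_Iic integrable_gaussPdf.integrableOn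
      integrable_gaussPdf.integrableOn, gaussCdf, gaussCdf]
    ring
  rw [hcdf]
  exact (intervalIntegral.integral_hasDerivAt_right integrable_gaussPdf.intervalIntegrable
    (continuous_gaussPdf.stronglyMeasurableAtFilter _ _)
    continuous_gaussPdf.continuousAt).const_add _

lemma setIntegral_Iic_add_sq_mul_gaussPdf (c z : ℝ) :
    ∫ t in Iic z, (c + t) ^ 2 * gaussPdf t =
      (1 + c ^ 2) * gaussCdf z - (2 * c + z) * gaussPdf z := by
  set f : ℝ → ℝ := fun t => -((2 * c + t) * gaussPdf t)
  set f' : ℝ → ℝ := fun t => (t ^ 2 + 2 * c * t - 1) * gaussPdf t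
  have hf : ∀ t, HasDerivAt f (f' t) t := fun t =>
    (((hasDerivAt_id t).const_add (2 * c)).mul (hasDerivAt_gaussPdf t)).neg.congr_deriv
      (by simp only [f', id]; ring)
  have hf'int : Integrable f' := by
    refine (integrable_eval_mul_gaussPdf (X ^ 2 + C (2 * c) * X - 1)).congr
      (ae_of_all _ fun t => ?_)
    simp [f']
  have hfint : Integrable f := by
    refine (integrable_eval_mul_gaussPdf (C (2 * c) + X)).neg.congr (ae_of_all _ fun t => ?_)
    simp [f]
  have hlim : Tendsto f atBot (𝓝 0) :=
    tendsto_zero_of_hasDerivAt_of_integrableOn_Iic (a := 0) (fun t _ => hf t)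
      hf'int.integrableOn hfint.integrableOn
  have hFTC : ∫ t in Iic z, f' t = f z := by
    simpa using
      integral_Iic_of_hasDerivAt_of_tendsto' (fun t _ => hf t) hf'int.integrableOn hlim
  have hsplit :
      (fun t => (c + t) ^ 2 * gaussPdf t) = fun t => f' t + (1 + c ^ 2) * gaussPdf t := by
    ext t; simp only [f']; ring
  rw [hsplit, integral_add hf'int.integrableOn (integrable_gaussPdf.const_mul _).integrableOn,
    integral_const_mul, hFTC, gaussCdf]
  simp only [f]
  ring

lemma gaussPdf_sq_le_gaussCdf_mul (z : ℝ) :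
    gaussPdf z ^ 2 ≤ gaussCdf z * (gaussCdf z - z * gaussPdf z) := by
  have hquad : ∀ c : ℝ, 0 ≤ gaussCdf z * (c * c) + (-2 * gaussPdf z) * c
      + (gaussCdf z - z * gaussPdf z) := fun c => by
    have := setIntegral_nonneg (μ := volume) measurableSet_Iic
      fun t (_ : t ∈ Iic z) => mul_nonneg (sq_nonneg (c + t)) (gaussPdf_pos t).le
    rw [setIntegral_Iic_add_sq_mul_gaussPdf] at this
    linarith
  have := discrim_le_zero hquad
  rw [discrim] at this
  linarith

lemma HasDerivAt.nonpos_of_isMaxOn_Ico {f : ℝ → ℝ} {f' a b c : ℝ} (hf : HasDerivAt f f' c)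
    (hc : c ∈ Ico a b) (hmax : IsMaxOn f (Ico a b) c) : f' ≤ 0 := by
  have hseg : segment ℝ c (c + (b - c) / 2) ⊆ Ico a b := by
    rw [segment_eq_Icc (by linarith [hc.2])]
    exact Icc_subset_Ico hc.1 (by linarith [hc.2])
  have := hmax.localize.hasFDerivWithinAt_nonpos
    hf.hasDerivWithinAt.hasFDerivWithinAt (mem_posTangentConeAt_of_segment_subset hseg)
  rw [ContinuousLinearMap.toSpanSingleton_apply, smul_eq_mul] at this
  exact nonpos_of_mul_nonpos_right this (by linarith [hc.2])

lemma Zfun_mul_sqrt {yhat ρ : ℝ} (hρ : ρ ^ 2 < 1) :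
    Zfun yhat ρ * √(1 - ρ ^ 2) = (ρ - 1) * yhat := by
  have : √(1 - ρ ^ 2) ≠ 0 := (Real.sqrt_pos.mpr (by linarith)).ne'
  rw [Zfun, div_mul_cancel₀ _ this]

lemma hasDerivAt_EI {yhat ρ : ℝ} (hρ : ρ ^ 2 < 1) :
    HasDerivAt (EI yhat)
      (yhat * gaussCdf (Zfun yhat ρ) - ρ / √(1 - ρ ^ 2) * gaussPdf (Zfun yhat ρ)) ρ := by
  have hpos : 0 < 1 - ρ ^ 2 := by linarith
  have hsqrt : HasDerivAt (fun r => √(1 - r ^ 2)) (-ρ / √(1 - ρ ^ 2)) ρ := by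
    convert ((hasDerivAt_pow 2 ρ).const_sub 1).sqrt hpos.ne' using 1
    field_simp
    ring
  have hZ : HasDerivAt (Zfun yhat) (deriv (Zfun yhat) ρ) ρ := by
    refine DifferentiableAt.hasDerivAt ?_
    unfold Zfun
    fun_prop (disch := first | exact hpos.ne' | exact (Real.sqrt_pos.mpr hpos).ne')
  have := ((((hasDerivAt_id ρ).sub_const 1).mul_const yhat).mul
    ((hasDerivAt_gaussCdf _).comp ρ hZ)).add (hsqrt.mul ((hasDerivAt_gaussPdf _).comp ρ hZ))
  refine this.congr_deriv ?_
  simp only [id, Function.comp_apply]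
  -- the terms in `Z'` cancel because `φ' = -z φ` and `Z √(1 - ρ²) = (ρ - 1) ŷ`
  linear_combination
    (-gaussPdf (Zfun yhat ρ) * deriv (Zfun yhat) ρ) * Zfun_mul_sqrt (yhat := yhat) hρ

lemma mul_gaussCdf_mul_sqrt_le_of_isMaxOn {yhat ρ : ℝ} (hρ : ρ ∈ Ico 0 1)
    (hmax : IsMaxOn (EI yhat) (Ico 0 1) ρ) :
    yhat * gaussCdf (Zfun yhat ρ) * √(1 - ρ ^ 2) ≤ ρ * gaussPdf (Zfun yhat ρ) := by
  have hρsq : ρ ^ 2 < 1 := by nlinarith [hρ.1, hρ.2]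
  have := (hasDerivAt_EI hρsq).nonpos_of_isMaxOn_Ico hρ hmax
  rwa [sub_nonpos, div_mul_eq_mul_div, le_div_iff₀ (Real.sqrt_pos.mpr (by linarith))] at this

lemma le_mul_sqrt_of_sq_mul_one_sub_le {y ρ : ℝ} (hρ0 : 0 ≤ ρ) (hρ1 : ρ < 1)
    (h : y ^ 2 * (1 - ρ) ≤ ρ ^ 2) : y ≤ ρ * √((1 + ρ) / (1 - ρ)) := by
  have h1ρ : 0 < 1 - ρ := by linarith
  rw [← Real.sqrt_sq hρ0, ← Real.sqrt_mul (sq_nonneg ρ), Real.sqrt_sq hρ0]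
  refine (le_abs_self y).trans (Real.abs_le_sqrt ?_)
  rw [← mul_div_assoc, le_div_iff₀ h1ρ]
  nlinarith

theorem ei_maximizer_correlation_bound (yhat : ℝ) (hy : 0 < yhat) (ρstar : ℝ)
    (hρ : ρstar ∈ Set.Ico (0 : ℝ) 1)
    (hmax : ∀ ρ ∈ Set.Ico (0 : ℝ) 1, EI yhat ρ ≤ EI yhat ρstar) :
    ρstar * Real.sqrt ((1 + ρstar) / (1 - ρstar)) ≥ yhat := by
  obtain ⟨hρ0, hρ1⟩ := hρ
  have hρsq : ρstar ^ 2 < 1 := by nlinarith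
  set s := √(1 - ρstar ^ 2)
  set Z := Zfun yhat ρstar
  set Φ := gaussCdf Z
  set φ := gaussPdf Z
  have hs2 : s ^ 2 = 1 - ρstar ^ 2 := Real.sq_sqrt (by linarith)
  have hZs : Z * s = (ρstar - 1) * yhat := Zfun_mul_sqrt hρsq
  have hfoc : yhat * Φ * s ≤ ρstar * φ :=
    mul_gaussCdf_mul_sqrt_le_of_isMaxOn ⟨hρ0, hρ1⟩ hmax
  have hΦ : 0 < Φ := gaussCdf_pos Z
  have hφ : 0 < φ := gaussPdf_pos Z
  have hmills : φ ^ 2 ≤ Φ * (Φ - Z * φ) := gaussPdf_sq_le_gaussCdf_mul Z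
  have hratio : φ ^ 2 ≤ (1 + ρstar) * Φ ^ 2 := by
    have h1 : φ ^ 2 * s ^ 2 ≤ Φ ^ 2 * s ^ 2 + (1 - ρstar) * φ * (yhat * Φ * s) := by
      linear_combination mul_le_mul_of_nonneg_right hmills (sq_nonneg s) - (Φ * φ * s) * hZs
    refine le_of_mul_le_mul_right ?_ (by linarith : 0 < 1 - ρstar)
    linear_combination h1 + ((1 - ρstar) * φ) * hfoc - (φ ^ 2 - Φ ^ 2) * hs2
  have hkey : yhat ^ 2 * (1 - ρstar) ≤ ρstar ^ 2 := by
    refine le_of_mul_le_mul_right ?_ (by positivity : 0 < (1 + ρstar) * Φ ^ 2)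
    linear_combination pow_le_pow_left₀ (by positivity) hfoc 2 + ρstar ^ 2 * hratio
      - (yhat ^ 2 * Φ ^ 2) * hs2
  exact le_mul_sqrt_of_sq_mul_one_sub_le hρ0 hρ1 hkey
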